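/- Let (X_i)_{i∈ℤ} be covariance stationary with autocovariance φ. Let b ≥ 1 and N > b be integers, and suppose there exist constants C ≥ 0 and γ > 0 such that |φ(m)| ≤ C · m^{-2γ} for every integer m ≥ N − b. Then | Cov( (1/b)∑_{i=1}^{b} X_i , (1/b)∑_{i=N}^{N+b-1} X_i ) | ≤ C · (N − b)^{-2γ}. -/

import Mathlib

open MeasureTheory Filter

/-- Covariance of two real random variables. -/
noncomputable def cov {Ω : Type*} [MeasurableSpace Ω] (P : Measure Ω) (X Y : Ω → ℝ) : ℝ :=
  ∫ ω, (X ω - ∫ ω', X ω' ∂P) * (Y ω - ∫ ω', Y ω' ∂P) ∂P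

lemma integrable_mul_of_L2 {Ω : Type*} [MeasurableSpace Ω] {P : Measure Ω}
    {f g : Ω → ℝ} (hf : MemLp f 2 P) (hg : MemLp g 2 P) :
    Integrable (fun ω => f ω * g ω) P := by
  have h1 := hf.integrable_sq
  have h2 := hg.integrable_sq
  refine Integrable.mono' ((h1.add h2).div_const 2) (hf.1.mul hg.1) ?_
  filter_upwards with ω
  simp only [Pi.add_apply]
  rw [Real.norm_eq_abs, abs_mul]
  nlinarith [sq_nonneg (|f ω| - |g ω|), abs_nonneg (f ω), abs_nonneg (g ω),
    sq_abs (f ω), sq_abs (g ω)]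

lemma cov_const_mul {Ω : Type*} [MeasurableSpace Ω] (P : Measure Ω) (a : ℝ) (F G : Ω → ℝ) :
    cov P (fun ω => a * F ω) G = a * cov P F G := by
  unfold cov
  rw [integral_const_mul]
  have : ∀ ω, (a * F ω - a * ∫ ω', F ω' ∂P) * (G ω - ∫ ω', G ω' ∂P)
      = a * ((F ω - ∫ ω', F ω' ∂P) * (G ω - ∫ ω', G ω' ∂P)) := fun ω => by ring
  simp_rw [this, integral_const_mul]

lemma cov_comm {Ω : Type*} [MeasurableSpace Ω] (P : Measure Ω) (F G : Ω → ℝ) :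
    cov P F G = cov P G F := by
  unfold cov; simp_rw [mul_comm]

lemma cov_sum_left {Ω : Type*} [MeasurableSpace Ω] (P : Measure Ω) [IsProbabilityMeasure P]
    {ι : Type*} (s : Finset ι) (X : ι → Ω → ℝ) (G : Ω → ℝ)
    (hX : ∀ i ∈ s, MemLp (X i) 2 P) (hG : MemLp G 2 P) :
    cov P (fun ω => ∑ i ∈ s, X i ω) G = ∑ i ∈ s, cov P (X i) G := by
  unfold cov
  have hint : ∀ i ∈ s, Integrable (X i) P := fun i hi => (hX i hi).integrable one_le_two
  rw [integral_finset_sum s hint]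
  have key : ∀ ω, (∑ i ∈ s, X i ω - ∑ i ∈ s, ∫ ω', X i ω' ∂P) * (G ω - ∫ ω', G ω' ∂P)
      = ∑ i ∈ s, (X i ω - ∫ ω', X i ω' ∂P) * (G ω - ∫ ω', G ω' ∂P) := by
    intro ω
    rw [← Finset.sum_sub_distrib, Finset.sum_mul]
  simp_rw [key]
  exact integral_finset_sum s fun i hi =>
    integrable_mul_of_L2 ((hX i hi).sub (memLp_const _)) (hG.sub (memLp_const _))

/-- Under power-law decay of the autocovariances, distant block means are nearly
uncorrelated. -/
theorem block_mean_covariance_bound {Ω : Type*} [MeasurableSpace Ω] (P : Measure Ω)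
    [IsProbabilityMeasure P] (X : ℤ → Ω → ℝ) (φ : ℤ → ℝ)
    (hL2 : ∀ i, MemLp (X i) 2 P)
    (hstat : ∀ i j : ℤ, cov P (X i) (X j) = φ (j - i))
    (b N : ℕ) (hb : 1 ≤ b) (hN : b < N)
    (C γ : ℝ) (hC : 0 ≤ C) (hγ : 0 < γ)
    (hdecay : ∀ m : ℤ, (N : ℤ) - b ≤ m → |φ m| ≤ C * (m : ℝ) ^ (-(2 * γ))) :
    |cov P (fun ω => (1 / b : ℝ) * ∑ i ∈ Finset.Icc (1 : ℤ) b, X i ω)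
           (fun ω => (1 / b : ℝ) * ∑ i ∈ Finset.Icc (N : ℤ) ((N : ℤ) + b - 1), X i ω)|
      ≤ C * ((N : ℝ) - b) ^ (-(2 * γ)) := by
  set A : Finset ℤ := Finset.Icc (1 : ℤ) b with hA
  set B : Finset ℤ := Finset.Icc (N : ℤ) ((N : ℤ) + b - 1) with hB
  have hmemA : MemLp (fun ω => ∑ i ∈ A, X i ω) 2 P := by
    have h := memLp_finset_sum' (μ := P) (p := 2) A (f := X) (fun i _ => hL2 i)
    have : (fun ω => ∑ i ∈ A, X i ω) = ∑ i ∈ A, X i := by funext ω; simp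
    rw [this]; exact h
  -- expand the covariance
  have hexp : cov P (fun ω => (1 / b : ℝ) * ∑ i ∈ A, X i ω)
      (fun ω => (1 / b : ℝ) * ∑ i ∈ B, X i ω)
      = (1 / b : ℝ) * ((1 / b : ℝ) * ∑ i ∈ A, ∑ j ∈ B, φ (j - i)) := by
    rw [cov_const_mul]
    congr 1
    rw [cov_comm, cov_const_mul]
    congr 1
    calc cov P (fun ω => ∑ j ∈ B, X j ω) (fun ω => ∑ i ∈ A, X i ω)
        = ∑ j ∈ B, cov P (X j) (fun ω => ∑ i ∈ A, X i ω) :=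
          cov_sum_left P B X _ (fun j _ => hL2 j) hmemA
      _ = ∑ j ∈ B, ∑ i ∈ A, cov P (X i) (X j) := by
          refine Finset.sum_congr rfl fun j _ => ?_
          rw [cov_comm]
          exact cov_sum_left P A X _ (fun i _ => hL2 i) (hL2 j)
      _ = ∑ j ∈ B, ∑ i ∈ A, φ (j - i) :=
          Finset.sum_congr rfl fun j _ => Finset.sum_congr rfl fun i _ => hstat i j
      _ = ∑ i ∈ A, ∑ j ∈ B, φ (j - i) := Finset.sum_comm
  rw [hexp]
  have hb0 : (0 : ℝ) < b := by exact_mod_cast hb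
  have hNb : (0 : ℝ) < (N : ℝ) - b := by
    have : (b : ℝ) < N := by exact_mod_cast hN
    linarith
  set D : ℝ := C * ((N : ℝ) - b) ^ (-(2 * γ)) with hD
  have hD0 : 0 ≤ D := by positivity
  have cardA : A.card = b := by
    rw [hA, Int.card_Icc]; omega
  have cardB : B.card = b := by
    rw [hB, Int.card_Icc]; omega
  have hterm : ∀ i ∈ A, ∀ j ∈ B, |φ (j - i)| ≤ D := by
    intro i hi j hj
    rw [hA, Finset.mem_Icc] at hi
    rw [hB, Finset.mem_Icc] at hj
    have hij : (N : ℤ) - b ≤ j - i := by omega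
    refine (hdecay (j - i) hij).trans ?_
    refine mul_le_mul_of_nonneg_left ?_ hC
    refine Real.rpow_le_rpow_of_nonpos hNb ?_ (by linarith)
    exact_mod_cast hij
  have hS : |∑ i ∈ A, ∑ j ∈ B, φ (j - i)| ≤ (b : ℝ) * ((b : ℝ) * D) := by
    calc |∑ i ∈ A, ∑ j ∈ B, φ (j - i)|
        ≤ ∑ i ∈ A, |∑ j ∈ B, φ (j - i)| := Finset.abs_sum_le_sum_abs _ _
      _ ≤ ∑ i ∈ A, ∑ j ∈ B, |φ (j - i)| :=
          Finset.sum_le_sum fun i _ => Finset.abs_sum_le_sum_abs _ _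
      _ ≤ ∑ i ∈ A, ∑ j ∈ B, D :=
          Finset.sum_le_sum fun i hi => Finset.sum_le_sum fun j hj => hterm i hi j hj
      _ = (b : ℝ) * ((b : ℝ) * D) := by
          simp [Finset.sum_const, cardA, cardB, nsmul_eq_mul, mul_assoc]
  have hfinal : |(1 / b : ℝ) * ((1 / b : ℝ) * ∑ i ∈ A, ∑ j ∈ B, φ (j - i))|
      ≤ (1 / b : ℝ) * ((1 / b : ℝ) * ((b : ℝ) * ((b : ℝ) * D))) := by
    rw [abs_mul, abs_mul, abs_of_nonneg (by positivity : (0:ℝ) ≤ (1 / b : ℝ))]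
    gcongr
  refine hfinal.trans ?_
  have : (1 / b : ℝ) * ((1 / b : ℝ) * ((b : ℝ) * ((b : ℝ) * D))) = D := by
    field_simp
  rw [this]
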